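/- arXiv:1411.5788 — 4 statements merged into one kernel-verified Lean document; each statement's English description precedes it below -/
import Mathlib

section
/- Let H be a bialgebra over a field k. Then H admits an antipode if and only if the linear map β : H ⊗ H → H ⊗ H defined by β(x ⊗ y) = Δ(x) · (1 ⊗ y) (i.e. β = (id ⊗ μ) ∘ (Δ ⊗ id)) is bijective. -/
open Coalgebra TensorProduct

/-- `S : H →ₗ[k] H` is an antipode for the bialgebra `H`: a two-sided convolution
inverse of the identity map. -/
def IsAntipode (k H : Type*) [CommRing k] [Ring H] [Bialgebra k H] (S : H →ₗ[k] H) : Prop :=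
  LinearMap.mul' k H ∘ₗ S.rTensor H ∘ₗ (Coalgebra.comul : H →ₗ[k] H ⊗[k] H) =
      Algebra.linearMap k H ∘ₗ Coalgebra.counit ∧
    LinearMap.mul' k H ∘ₗ S.lTensor H ∘ₗ (Coalgebra.comul : H →ₗ[k] H ⊗[k] H) =
      Algebra.linearMap k H ∘ₗ Coalgebra.counit

/-- The Hopf (Galois) map `β = (id ⊗ μ) ∘ (Δ ⊗ id) : H ⊗ H → H ⊗ H`,
`x ⊗ y ↦ Δ(x) · (1 ⊗ y)`. -/
noncomputable def hopfMap (k H : Type*) [CommRing k] [Ring H] [Bialgebra k H] :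
    H ⊗[k] H →ₗ[k] H ⊗[k] H :=
  LinearMap.lTensor H (LinearMap.mul' k H) ∘ₗ
    (TensorProduct.assoc k H H H).toLinearMap ∘ₗ
      LinearMap.rTensor H (Coalgebra.comul : H →ₗ[k] H ⊗[k] H)

/-! For `f : H → H` put `β_f (x ⊗ y) = x₍₁₎ ⊗ f(x₍₂₎) y`, so that `β = β_id`. Coassociativity and
counitality make `f ↦ β_f` an injective monoid map from the convolution algebra to `End (H ⊗ H)`,
so a convolution inverse `S` of `id` gives the inverse `β_S` of `β`. Conversely, every
endomorphism of `H ⊗ H` commuting with right multiplication on the second factor and with the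
coaction `Δ ⊗ id` is some `β_f`; both properties pass from `β` to `β⁻¹`, so `β⁻¹ = β_S`, and
injectivity of `f ↦ β_f` makes `S` a convolution inverse of `id`. -/

open LinearMap WithConv

section Coaction

variable (k H M : Type*) [CommSemiring k] [AddCommMonoid H] [Module k H] [Coalgebra k H]
  [AddCommMonoid M] [Module k M]

noncomputable def tensorCoaction : H ⊗[k] M →ₗ[k] H ⊗[k] (H ⊗[k] M) :=
  (TensorProduct.assoc k H H M).toLinearMap ∘ₗ comul.rTensor M

variable {k H M}

lemma tensorCoaction_tmul {ι : Type*} {x : H} (r : Repr k x ι) (m : M) :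
    tensorCoaction k H M (x ⊗ₜ m) = ∑ i ∈ r.index, r.left i ⊗ₜ (r.right i ⊗ₜ m) := by
  simp [tensorCoaction, ← r.eq, sum_tmul]

lemma lTensor_lift_lsmul_counit_comp_tensorCoaction :
    (lift (lsmul k M ∘ₗ counit)).lTensor H ∘ₗ tensorCoaction k H M = LinearMap.id := by
  ext x m
  have h := congr((toSpanSingleton k M m).lTensor H $(sum_tmul_counit_eq (ℛ k x)))
  simp only [map_sum, lTensor_tmul, toSpanSingleton_apply, one_smul] at h
  simpa [tensorCoaction_tmul (ℛ k x), smul_tmul] using h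

end Coaction

section HopfMapWith

variable {k H : Type*} [CommSemiring k] [Semiring H] [Bialgebra k H]

variable (k H) in
noncomputable def hopfMapWith (f : H →ₗ[k] H) : Module.End k (H ⊗[k] H) :=
  (mul' k H ∘ₗ f.rTensor H).lTensor H ∘ₗ tensorCoaction k H H

lemma hopfMapWith_tmul (f : H →ₗ[k] H) {ι : Type*} {x : H} (r : Repr k x ι) (y : H) :
    hopfMapWith k H f (x ⊗ₜ y) = ∑ i ∈ r.index, r.left i ⊗ₜ (f (r.right i) * y) := by
  simp [hopfMapWith, tensorCoaction_tmul r]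

lemma hopfMapWith_convOne : hopfMapWith k H (1 : WithConv (H →ₗ[k] H)).ofConv = 1 := by
  have h : mul' k H ∘ₗ (1 : WithConv (H →ₗ[k] H)).ofConv.rTensor H =
      lift (lsmul k H ∘ₗ counit) := by
    ext a b
    simp [LinearMap.convOne_def, Algebra.smul_def]
  rw [hopfMapWith, h, lTensor_lift_lsmul_counit_comp_tensorCoaction, Module.End.one_eq_id]

lemma hopfMapWith_convMul (f g : WithConv (H →ₗ[k] H)) :
    hopfMapWith k H (f * g).ofConv = hopfMapWith k H f.ofConv * hopfMapWith k H g.ofConv := by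
  ext x y
  let r := ℛ k x
  have coassoc := congr((mulRight k y ∘ₗ mul' k H ∘ₗ map f.ofConv g.ofConv).lTensor H
    $(sum_tmul_tmul_eq r (fun i ↦ ℛ k (r.left i)) (fun i ↦ ℛ k (r.right i))))
  simp only [map_sum, lTensor_tmul, comp_apply, TensorProduct.map_tmul, mul'_apply,
    mulRight_apply, mul_assoc] at coassoc
  simp only [AlgebraTensorModule.curry_apply, curry_apply, restrictScalars_apply,
    Module.End.mul_apply, hopfMapWith_tmul _ r, map_sum, hopfMapWith_tmul _ (ℛ k (r.left _)),
    (ℛ k (r.right _)).convMul_apply, Finset.sum_mul, tmul_sum, mul_assoc]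
  exact coassoc.symm

variable (k H) in
noncomputable def hopfMapHom : WithConv (H →ₗ[k] H) →* Module.End k (H ⊗[k] H) where
  toFun f := hopfMapWith k H f.ofConv
  map_one' := hopfMapWith_convOne
  map_mul' := hopfMapWith_convMul

@[simp]
lemma hopfMapHom_apply (f : WithConv (H →ₗ[k] H)) :
    hopfMapHom k H f = hopfMapWith k H f.ofConv :=
  rfl

lemma lift_lsmul_counit_hopfMapWith_tmul_one (f : H →ₗ[k] H) (x : H) :
    lift (lsmul k H ∘ₗ counit) (hopfMapWith k H f (x ⊗ₜ 1)) = f x := by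
  simp only [hopfMapWith_tmul _ (ℛ k x), mul_one, map_sum, lift.tmul, comp_apply, lsmul_apply,
    ← map_smul]
  rw [← map_sum, sum_counit_smul]

lemma hopfMapHom_injective : Function.Injective (hopfMapHom k H) := fun f g h ↦
  WithConv.ext <| LinearMap.ext fun x ↦ by
    simpa only [hopfMapHom_apply, lift_lsmul_counit_hopfMapWith_tmul_one] using
      congr(lift (lsmul k H ∘ₗ counit) ($h (x ⊗ₜ 1)))

lemma commute_hopfMapWith_lTensor_mulRight (f : H →ₗ[k] H) (c : H) :
    Commute (hopfMapWith k H f) ((mulRight k c).lTensor H) := by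
  ext x y
  simp [hopfMapWith_tmul _ (ℛ k x), mul_assoc]

lemma tensorCoaction_comp_hopfMapWith (f : H →ₗ[k] H) :
    tensorCoaction k H H ∘ₗ hopfMapWith k H f =
      (hopfMapWith k H f).lTensor H ∘ₗ tensorCoaction k H H := by
  ext x y
  let r := ℛ k x
  have coassoc := congr(((mulRight k y ∘ₗ f).lTensor H).lTensor H
    $(sum_tmul_tmul_eq r (fun i ↦ ℛ k (r.left i)) (fun i ↦ ℛ k (r.right i))))
  simp only [map_sum, lTensor_tmul, comp_apply, mulRight_apply] at coassoc
  simpa [hopfMapWith_tmul _ r, tensorCoaction_tmul r, tensorCoaction_tmul (ℛ k (r.left _)),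
    hopfMapWith_tmul _ (ℛ k (r.right _)), tmul_sum] using coassoc

lemma lift_lsmul_counit_comp_lTensor_mulRight {A : Type*} [Semiring A] [Algebra k A] (c : A) :
    lift (lsmul k A ∘ₗ counit) ∘ₗ (mulRight k c).lTensor H =
      mulRight k c ∘ₗ lift (lsmul k A ∘ₗ counit) := by
  ext x y
  simp

lemma exists_hopfMapWith_eq {φ : Module.End k (H ⊗[k] H)}
    (hmod : ∀ c : H, Commute φ ((mulRight k c).lTensor H))
    (hcomod : tensorCoaction k H H ∘ₗ φ = φ.lTensor H ∘ₗ tensorCoaction k H H) :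
    ∃ f, hopfMapWith k H f = φ := by
  set T : H ⊗[k] H →ₗ[k] H := lift (lsmul k H ∘ₗ counit)
  refine ⟨T ∘ₗ φ ∘ₗ (mk k H H).flip 1, ?_⟩
  have hT : mul' k H ∘ₗ (T ∘ₗ φ ∘ₗ (mk k H H).flip 1).rTensor H = T ∘ₗ φ := by
    ext x y
    have h := congr(T ($((hmod y).eq) (x ⊗ₜ 1)))
    simp only [Module.End.mul_apply, lTensor_tmul, mulRight_apply, one_mul] at h
    simp only [AlgebraTensorModule.curry_apply, curry_apply, restrictScalars_apply, comp_apply,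
      rTensor_tmul, flip_apply, mk_apply, mul'_apply]
    rw [h]
    exact congr($(lift_lsmul_counit_comp_lTensor_mulRight y) (φ (x ⊗ₜ 1))).symm
  calc hopfMapWith k H (T ∘ₗ φ ∘ₗ (mk k H H).flip 1)
      = T.lTensor H ∘ₗ φ.lTensor H ∘ₗ tensorCoaction k H H := by
        rw [hopfMapWith, hT, lTensor_comp, comp_assoc]
    _ = φ := by
        rw [← hcomod, ← comp_assoc, lTensor_lift_lsmul_counit_comp_tensorCoaction, id_comp]

lemma isUnit_hopfMapHom_iff {f : WithConv (H →ₗ[k] H)} :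
    IsUnit (hopfMapHom k H f) ↔ IsUnit f := by
  refine ⟨fun ⟨u, hu⟩ ↦ ?_, IsUnit.map _⟩
  have hmod (c : H) : Commute u.inv ((mulRight k c).lTensor H) :=
    Commute.units_inv_left (by rw [hu]; exact commute_hopfMapWith_lTensor_mulRight f.ofConv c)
  have hcomod_u : tensorCoaction k H H ∘ₗ u.val = u.val.lTensor H ∘ₗ tensorCoaction k H H := by
    rw [hu]
    exact tensorCoaction_comp_hopfMapWith f.ofConv
  have hcomod : tensorCoaction k H H ∘ₗ u.inv = u.inv.lTensor H ∘ₗ tensorCoaction k H H :=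
    calc tensorCoaction k H H ∘ₗ u.inv
        = (u.inv * u.val).lTensor H ∘ₗ tensorCoaction k H H ∘ₗ u.inv := by
          rw [u.inv_val, Module.End.one_eq_id, lTensor_id, id_comp]
      _ = u.inv.lTensor H ∘ₗ (tensorCoaction k H H ∘ₗ u.val) ∘ₗ u.inv := by
          rw [hcomod_u, lTensor_mul]
          rfl
      _ = u.inv.lTensor H ∘ₗ tensorCoaction k H H := by
          rw [comp_assoc, ← Module.End.mul_eq_comp, u.val_inv, Module.End.one_eq_id, comp_id]
  obtain ⟨g, hg⟩ := exists_hopfMapWith_eq hmod hcomod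
  refine isUnit_iff_exists.mpr ⟨toConv g, hopfMapHom_injective ?_, hopfMapHom_injective ?_⟩
  · rw [map_mul, ← hu, hopfMapHom_apply, ofConv_toConv, hg, u.val_inv, map_one]
  · rw [map_mul, ← hu, hopfMapHom_apply, ofConv_toConv, hg, u.inv_val, map_one]

end HopfMapWith

section Ring

variable {k H : Type*} [CommRing k] [Ring H] [Bialgebra k H]

lemma isAntipode_iff_convMul_eq_one {S : H →ₗ[k] H} :
    IsAntipode k H S ↔
      toConv S * toConv LinearMap.id = 1 ∧ toConv LinearMap.id * toConv S = 1 := by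
  simp only [IsAntipode, WithConv.ext_iff, LinearMap.convMul_def, LinearMap.convOne_def]
  rfl

lemma exists_isAntipode_iff_isUnit :
    (∃ S, IsAntipode k H S) ↔ IsUnit (toConv (LinearMap.id : H →ₗ[k] H)) := by
  simp only [isAntipode_iff_convMul_eq_one, isUnit_iff_exists]
  exact ⟨fun ⟨S, hS₁, hS₂⟩ ↦ ⟨toConv S, hS₂, hS₁⟩, fun ⟨S, hS₁, hS₂⟩ ↦ ⟨S.ofConv, hS₂, hS₁⟩⟩

lemma hopfMapWith_id : hopfMapWith k H LinearMap.id = hopfMap k H := by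
  rw [hopfMapWith, rTensor_id, comp_id]
  rfl

end Ring

/-- A bialgebra over a field admits an antipode iff the Hopf map
`β(x ⊗ y) = Δ(x)·(1 ⊗ y)` is bijective. -/
theorem exists_antipode_iff_hopfMap_bijective (k H : Type*) [Field k] [Ring H]
    [Bialgebra k H] :
    (∃ S : H →ₗ[k] H, IsAntipode k H S) ↔ Function.Bijective (hopfMap k H) := by
  rw [exists_isAntipode_iff_isUnit, ← isUnit_hopfMapHom_iff, hopfMapHom_apply, ofConv_toConv,
    hopfMapWith_id, Module.End.isUnit_iff]
end

section
/- Let C be a small category. Then C is a groupoid (every morphism is invertible) if and only if for every pair of objects x, y, the map from the set of composable pairs {(g, f) : f ∈ C(x, y), g ∈ C(y, z) for some z} to pairs {(h, f) : f ∈ C(x, y), h ∈ C(x, z)}, given by (g, f) ↦ (g ∘ f, f), is a bijection for all z. -/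
open CategoryTheory

namespace CategoryTheory

variable {C : Type*} [Category C]

def hopfMap (x z : C) : (Σ y : C, (x ⟶ y) × (y ⟶ z)) → Σ y : C, (x ⟶ y) × (x ⟶ z) :=
  fun p => ⟨p.1, (p.2.1, p.2.1 ≫ p.2.2)⟩

theorem hopfMap_bijective_of_isIso {x : C} (hx : ∀ (y : C) (f : x ⟶ y), IsIso f) (z : C) :
    Function.Bijective (hopfMap x z) := by
  refine Function.bijective_iff_has_inverse.mpr
    ⟨fun q => ⟨q.1, (q.2.1, inv q.2.1 ≫ q.2.2)⟩, ?_, ?_⟩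
  · rintro ⟨y, f, g⟩
    have := hx y f
    simp [hopfMap]
  · rintro ⟨y, f, h⟩
    have := hx y f
    simp [hopfMap]

theorem exists_comp_eq_of_hopfMap_surjective {x z : C} (hs : Function.Surjective (hopfMap x z))
    {y : C} (f : x ⟶ y) (h : x ⟶ z) : ∃ g : y ⟶ z, f ≫ g = h := by
  obtain ⟨⟨y', f', g⟩, hp⟩ := hs ⟨y, (f, h)⟩
  obtain ⟨rfl, hfg⟩ := Sigma.mk.inj_iff.mp hp
  obtain ⟨rfl, hg⟩ := Prod.mk.inj (eq_of_heq hfg)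
  exact ⟨g, hg⟩

-- The retraction of `f` is split epi and, by hypothesis, split mono, hence an isomorphism.
theorem isIso_of_forall_isSplitMono (h : ∀ {x y : C} (f : x ⟶ y), IsSplitMono f)
    {x y : C} (f : x ⟶ y) : IsIso f := by
  have := h (retraction f)
  have := isIso_of_epi_of_isSplitMono (retraction f)
  exact IsIso.of_isIso_fac_right (IsSplitMono.id f)

end CategoryTheory

/-- A small category is a groupoid iff for all objects `x, z` the 'Hopf map'
sending a composable pair `(g : y ⟶ z, f : x ⟶ y)` to `(g ∘ f, f)` is a bijection
from pairs `(f : x ⟶ y, g : y ⟶ z)` (with `y` varying) to pairs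
`(f : x ⟶ y, h : x ⟶ z)` (with `y` varying). -/
theorem groupoid_iff_hopfMap_bijective (C : Type*) [SmallCategory C] :
    (∀ (x y : C) (f : x ⟶ y), IsIso f) ↔
      ∀ x z : C, Function.Bijective
        (fun p : Σ y : C, (x ⟶ y) × (y ⟶ z) =>
          (⟨p.1, (p.2.1, p.2.1 ≫ p.2.2)⟩ : Σ y : C, (x ⟶ y) × (x ⟶ z))) := by
  refine ⟨fun h x => hopfMap_bijective_of_isIso (h x), fun h x y f => ?_⟩
  refine isIso_of_forall_isSplitMono (fun {a _} u => ?_) f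
  obtain ⟨r, hr⟩ := exists_comp_eq_of_hopfMap_surjective (h a a).2 u (𝟙 a)
  exact IsSplitMono.mk' ⟨r, hr⟩
end

section
/- Let C be a small category such that for all objects x, z, the assignment sending a composable pair (g : y → z, f : x → y) to the pair (g ∘ f, f) is bijective onto the set of pairs (h : x → z, f : x → y with arbitrary codomain y). Then every morphism of C has a two-sided inverse, so C is a groupoid. -/
open CategoryTheory

namespace CategoryTheory

variable {C : Type*} [Category C]

theorem left_inv_eq_right_inv {x y : C} {f k : x ⟶ y} {g : y ⟶ x}
    (hfg : f ≫ g = 𝟙 x) (hgk : g ≫ k = 𝟙 y) : f = k :=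
  calc f = f ≫ g ≫ k := by rw [hgk, Category.comp_id]
    _ = k := by rw [← Category.assoc, hfg, Category.id_comp]

theorem exists_comp_eq_of_surjective {x z : C}
    (hsurj : Function.Surjective
      (fun p : Σ y : C, (x ⟶ y) × (y ⟶ z) =>
        (⟨p.1, (p.2.1, p.2.1 ≫ p.2.2)⟩ : Σ y : C, (x ⟶ y) × (x ⟶ z))))
    {y : C} (f : x ⟶ y) (h : x ⟶ z) : ∃ g : y ⟶ z, f ≫ g = h := by
  obtain ⟨⟨y, f, g⟩, hp⟩ := hsurj ⟨y, f, h⟩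
  cases hp
  exact ⟨g, rfl⟩

end CategoryTheory

/-- If, for all objects `x, z` of a small category `C`, the assignment sending a
composable pair `(g : y ⟶ z, f : x ⟶ y)` to `(g ∘ f, f)` is bijective onto the set of
pairs `(h : x ⟶ z, f : x ⟶ y)` (with arbitrary `y`), then every morphism of `C` has a
two-sided inverse, i.e. `C` is a groupoid. -/
theorem groupoid_of_hopfMap_bijective (C : Type*) [SmallCategory C]
    (hbij : ∀ x z : C, Function.Bijective
      (fun p : Σ y : C, (x ⟶ y) × (y ⟶ z) =>
        (⟨p.1, (p.2.1, p.2.1 ≫ p.2.2)⟩ : Σ y : C, (x ⟶ y) × (x ⟶ z)))) :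
    ∀ (x y : C) (f : x ⟶ y), ∃ g : y ⟶ x, f ≫ g = 𝟙 x ∧ g ≫ f = 𝟙 y := by
  intro x y f
  obtain ⟨g, hfg⟩ := exists_comp_eq_of_surjective (hbij x x).2 f (𝟙 x)
  obtain ⟨k, hgk⟩ := exists_comp_eq_of_surjective (hbij y y).2 g (𝟙 y)
  exact ⟨g, hfg, left_inv_eq_right_inv hfg hgk ▸ hgk⟩
end

section
/- Let H be a bimonoid in a braided monoidal category C and suppose the fusion morphism β = (id_H ⊗ μ) ∘ (Δ ⊗ id_H) : H ⊗ H → H ⊗ H is invertible. Define S : H → H as the composite (ε ⊗ id) ∘ β⁻¹ ∘ (id ⊗ η) (suitably bracketed with unitors). Then S is an antipode for H, so H is a Hopf monoid. -/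
open CategoryTheory MonoidalCategory
open scoped MonObj ComonObj

/-!
Write `fusionOf g` for `a ⊗ b ↦ a₁ ⊗ g(a₂ ⊗ b)`, so that `β = fusionOf μ`. Such morphisms
are recovered from `g` through the counit, and by coassociativity they compose as
`fusionOf g ≫ fusionOf h = fusionOf (fusionOf g ≫ h)`; in particular `β⁻¹` is again of
this form. This gives `a₁ ⊗ S(a₂) = β⁻¹(a ⊗ 1)`, hence the right antipode law
`a₁ S(a₂) = ε(a) 1`. The right law in turn makes `a ⊗ b ↦ a₁ ⊗ S(a₂) b` a left inverse,
hence the inverse, of `β`; since `Δ a = β (a ⊗ 1)`, applying `ε ⊗ id` to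
`β⁻¹ (β (a ⊗ 1)) = a ⊗ 1` gives the left law `S(a₁) a₂ = ε(a) 1`.
-/

namespace CategoryTheory

variable {C : Type*} [Category C] [MonoidalCategory C]

section Comonoid

variable {X Y Z W : C} [ComonObj X]

def fusionOf (g : X ⊗ Y ⟶ Z) : X ⊗ Y ⟶ X ⊗ Z :=
  Δ[X] ▷ Y ≫ (α_ X X Y).hom ≫ X ◁ g

theorem fusionOf_counit (g : X ⊗ Y ⟶ Z) : fusionOf g ≫ ε[X] ▷ Z ≫ (λ_ Z).hom = g := by
  rw [fusionOf, Category.assoc, Category.assoc, whisker_exchange_assoc,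
    ← associator_naturality_left_assoc, ← comp_whiskerRight_assoc, ComonObj.counit_comul]
  monoidal

theorem fusionOf_counit_eq_id : fusionOf (ε[X] ▷ Y ≫ (λ_ Y).hom) = 𝟙 (X ⊗ Y) := by
  rw [fusionOf, MonoidalCategory.whiskerLeft_comp, ← associator_naturality_middle_assoc,
    ← comp_whiskerRight_assoc, ComonObj.comul_counit]
  monoidal

theorem fusionOf_comp_fusionOf (g : X ⊗ Y ⟶ Z) (h : X ⊗ Z ⟶ W) :
    fusionOf g ≫ fusionOf h = fusionOf (fusionOf g ≫ h) := by
  simp only [fusionOf, Category.assoc, MonoidalCategory.whiskerLeft_comp]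
  rw [whisker_exchange_assoc, associator_naturality_right_assoc,
    ← associator_naturality_left_assoc, ← comp_whiskerRight_assoc,
    ← associator_naturality_middle_assoc, ← comp_whiskerRight_assoc, ComonObj.comul_assoc]
  monoidal

theorem rightUnitor_inv_whiskerLeft_fusionOf (u : 𝟙_ C ⟶ Y) (g : X ⊗ Y ⟶ Z) :
    (ρ_ X).inv ≫ X ◁ u ≫ fusionOf g = Δ[X] ≫ X ◁ ((ρ_ X).inv ≫ X ◁ u ≫ g) := by
  rw [fusionOf, whisker_exchange_assoc]
  monoidal

theorem inv_fusionOf (g : X ⊗ Y ⟶ Z) [IsIso (fusionOf g)] :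
    inv (fusionOf g) = fusionOf (inv (fusionOf g) ≫ ε[X] ▷ Y ≫ (λ_ Y).hom) :=
  IsIso.inv_eq_of_hom_inv_id <| by
    rw [fusionOf_comp_fusionOf, IsIso.hom_inv_id_assoc, fusionOf_counit_eq_id]

theorem inv_fusionOf_comp (g : X ⊗ Y ⟶ Z) [IsIso (fusionOf g)] :
    inv (fusionOf g) ≫ g = ε[X] ▷ Z ≫ (λ_ Z).hom := by
  rw [IsIso.inv_comp_eq, fusionOf_counit]

end Comonoid

theorem rightUnitor_inv_whiskerLeft_whiskerRight_leftUnitor {X Y : C} (f : X ⟶ 𝟙_ C)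
    (g : 𝟙_ C ⟶ Y) :
    (ρ_ X).inv ≫ X ◁ g ≫ f ▷ Y ≫ (λ_ Y).hom = f ≫ g := by
  rw [whisker_exchange_assoc]
  monoidal

section Bimonoid

variable (X : C) [MonObj X] [ComonObj X]

abbrev fusion : X ⊗ X ⟶ X ⊗ X := fusionOf μ[X]

noncomputable def fusionAntipode [IsIso (fusion X)] : X ⟶ X :=
  (ρ_ X).inv ≫ X ◁ η[X] ≫ inv (fusion X) ≫ ε[X] ▷ X ≫ (λ_ X).hom

theorem rightUnitor_inv_whiskerLeft_one_fusion :
    (ρ_ X).inv ≫ X ◁ η[X] ≫ fusion X = Δ[X] := by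
  rw [fusion, rightUnitor_inv_whiskerLeft_fusionOf, MonObj.mul_one, Iso.inv_hom_id,
    MonoidalCategory.whiskerLeft_id, Category.comp_id]

theorem fusionOf_whiskerRight_mul_comp_mul (S : X ⟶ X) :
    fusionOf (S ▷ X ≫ μ[X]) ≫ μ[X] = (Δ[X] ≫ X ◁ S ≫ μ[X]) ▷ X ≫ μ[X] := by
  have : X ◁ μ[X] ≫ μ[X] = (α_ X X X).inv ≫ μ[X] ▷ X ≫ μ[X] := by
    rw [MonObj.mul_assoc, Iso.inv_hom_id_assoc]
  simp only [fusionOf, Category.assoc, MonoidalCategory.whiskerLeft_comp, this,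
    associator_inv_naturality_middle_assoc, Iso.hom_inv_id_assoc, comp_whiskerRight]

variable [IsIso (fusion X)]

theorem comul_whiskerLeft_fusionAntipode :
    Δ[X] ≫ X ◁ fusionAntipode X = (ρ_ X).inv ≫ X ◁ η[X] ≫ inv (fusion X) := by
  rw [inv_fusionOf, rightUnitor_inv_whiskerLeft_fusionOf, fusionAntipode]

theorem fusionAntipode_right : Δ[X] ≫ X ◁ fusionAntipode X ≫ μ[X] = ε[X] ≫ η[X] := by
  rw [← Category.assoc, comul_whiskerLeft_fusionAntipode, Category.assoc, Category.assoc,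
    inv_fusionOf_comp]
  exact rightUnitor_inv_whiskerLeft_whiskerRight_leftUnitor _ _

theorem inv_fusion_eq_of_antipode_right {S : X ⟶ X}
    (hS : Δ[X] ≫ X ◁ S ≫ μ[X] = ε[X] ≫ η[X]) :
    inv (fusion X) = fusionOf (S ▷ X ≫ μ[X]) :=
  IsIso.inv_eq_of_inv_hom_id <| by
    rw [fusion, fusionOf_comp_fusionOf, fusionOf_whiskerRight_mul_comp_mul, hS,
      comp_whiskerRight_assoc, MonObj.one_mul, fusionOf_counit_eq_id]

theorem fusionAntipode_left : Δ[X] ≫ fusionAntipode X ▷ X ≫ μ[X] = ε[X] ≫ η[X] := by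
  rw [← rightUnitor_inv_whiskerLeft_one_fusion,
    ← fusionOf_counit (fusionAntipode X ▷ X ≫ μ[X]),
    ← inv_fusion_eq_of_antipode_right X (fusionAntipode_right X)]
  simp only [Category.assoc, IsIso.hom_inv_id_assoc]
  exact rightUnitor_inv_whiskerLeft_whiskerRight_leftUnitor _ _

end Bimonoid

end CategoryTheory

/-- If the fusion morphism `β = (id ⊗ μ) ∘ (Δ ⊗ id)` of a bimonoid `A` in a braided
monoidal category is invertible, then `S = (ε ⊗ id) ∘ β⁻¹ ∘ (id ⊗ η)` is an antipode
for `A`, so `A` is a Hopf monoid. -/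
theorem antipode_of_fusion_isIso {C : Type*} [Category C] [MonoidalCategory C]
    [BraidedCategory C] (A : Bimon C)
    (hβ : IsIso (((ComonObj.comul (X := A.X) (self := Comon.comon (C := Mon C) A)).hom ▷ A.X.X) ≫ (α_ A.X.X A.X.X A.X.X).hom ≫
      (A.X.X ◁ (MonObj.mul (X := A.X.X))))) :
    let S : A.X.X ⟶ A.X.X :=
      (ρ_ A.X.X).inv ≫ (A.X.X ◁ (MonObj.one (X := A.X.X))) ≫
        inv (((ComonObj.comul (X := A.X) (self := Comon.comon (C := Mon C) A)).hom ▷ A.X.X) ≫ (α_ A.X.X A.X.X A.X.X).hom ≫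
          (A.X.X ◁ (MonObj.mul (X := A.X.X)))) ≫
        ((ComonObj.counit (X := A.X) (self := Comon.comon (C := Mon C) A)).hom ▷ A.X.X) ≫ (λ_ A.X.X).hom
    (ComonObj.comul (X := A.X) (self := Comon.comon (C := Mon C) A)).hom ≫ (S ▷ A.X.X) ≫ (MonObj.mul (X := A.X.X)) = (ComonObj.counit (X := A.X) (self := Comon.comon (C := Mon C) A)).hom ≫ (MonObj.one (X := A.X.X)) ∧
      (ComonObj.comul (X := A.X) (self := Comon.comon (C := Mon C) A)).hom ≫ (A.X.X ◁ S) ≫ (MonObj.mul (X := A.X.X)) = (ComonObj.counit (X := A.X) (self := Comon.comon (C := Mon C) A)).hom ≫ (MonObj.one (X := A.X.X)) := by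
  have : IsIso (fusion A.X.X) := hβ
  exact ⟨fusionAntipode_left A.X.X, fusionAntipode_right A.X.X⟩
end
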